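/- (Driver of the BSDE for the forward DR-expectation) Suppose Y_{t+1} takes values in {e_1,...,e_d} and under model (p, 𝔄) the conditional probability of Y_{t+1} = e_i given Y_t is c_𝔄(e_i; A^𝔄 p). Define the one-step expectation E(ξ_{t+1}|Y_t) := sup_{p,𝔄} { Σ_i ξ̂_{t+1}(e_i)·c_𝔄(e_i; A^𝔄 p) − ((κ_t(p)+γ_{t+1}(𝔄))/k)^{k'} }, where ξ_{t+1} = ξ̂_{t+1}(Y_{t+1}). Then with Z_t ∈ ℝ^d defined by e_i^T Z_t = ξ̂_{t+1}(e_i) and M_{t+1} = Y_{t+1} − d^{-1}·1 (with Y iid uniform under the reference measure P̄), the pair satisfies ξ_{t+1} = ξ_t − f(Z_t;κ_t) + Z_t^T M_{t+1}, where ξ_t := E(ξ_{t+1}|Y_t) and f(Z_t;κ_t) = sup_{p,𝔄} { Σ_i Z_t^i (c_𝔄(e_i; A^𝔄 p) − d^{-1}) − ((κ_t(p)+γ_{t+1}(𝔄))/k)^{k'} }. -/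
import Mathlib


open BigOperators

/-- **driver of the BSDE for the forward DR-expectation.** With
`ξ_{t+1} = ξ̂(Y_{t+1})`, `Y_{t+1}` valued in the `d` basis vectors, one-step
DR-expectation `ξ_t = sup_{p,𝔄} { Σ_i ξ̂(e_i) c_𝔄(e_i; A^𝔄 p) − ((κ_t(p)+γ_{t+1}(𝔄))/k)^{k'} }`,
`Z_t = (ξ̂(e_i))_i` and `M_{t+1} = e_{Y_{t+1}} − d⁻¹·1` (with `Y` iid uniform
under the reference measure), one has
`ξ_{t+1} = ξ_t − f(Z_t;κ_t) + Z_tᵀ M_{t+1}` where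
`f(Z;κ) = sup_{p,𝔄} { Σ_i Z^i (c_𝔄(e_i; A^𝔄 p) − d⁻¹) − ((κ_t(p)+γ_{t+1}(𝔄))/k)^{k'} }`. -/
theorem dr_expectation_bsde_driver
    {N d : ℕ} (hN : 0 < N) (hd : 0 < d) {𝔸 : Type*} [Nonempty 𝔸]
    (simplex : Set (Fin N → ℝ))
    (hsimplex : simplex = {p | (∀ i, 0 ≤ p i) ∧ ∑ i, p i = 1})
    -- `cpred 𝔞 i p` is the predictive probability `c_𝔄(e_i; A^𝔄 p)`
    (cpred : 𝔸 → Fin d → (Fin N → ℝ) → ℝ)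
    (hcnonneg : ∀ 𝔞 i p, p ∈ simplex → 0 ≤ cpred 𝔞 i p)
    (hcsum : ∀ 𝔞 p, p ∈ simplex → ∑ i, cpred 𝔞 i p = 1)
    -- penalties
    (κt : (Fin N → ℝ) → ℝ) (hκ : ∀ p, 0 ≤ κt p)
    (γ : 𝔸 → ℝ) (hγ : ∀ 𝔞, 0 ≤ γ 𝔞)
    (k : ℝ) (hk : 0 < k) (k' : ℝ) (hk' : 1 ≤ k')
    (ξhat : Fin d → ℝ)
    (S1 S2 : Set ℝ)
    (hS1 : S1 = {x : ℝ | ∃ p 𝔞, p ∈ simplex ∧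
      x = (∑ i, ξhat i * cpred 𝔞 i p) - ((κt p + γ 𝔞) / k) ^ k'})
    (hS2 : S2 = {x : ℝ | ∃ p 𝔞, p ∈ simplex ∧
      x = (∑ i, ξhat i * (cpred 𝔞 i p - (d : ℝ)⁻¹)) - ((κt p + γ 𝔞) / k) ^ k'})
    (hbdd : BddAbove S1) (hne : S1.Nonempty) :
    -- for every realized value `j` of `Y_{t+1}`:
    ∀ j : Fin d,
      ξhat j = sSup S1 - sSup S2
        + ∑ i, ξhat i * ((if i = j then (1 : ℝ) else 0) - (d : ℝ)⁻¹) := by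
  intro j
  set c : ℝ := (d : ℝ)⁻¹ * ∑ i, ξhat i with hc
  have key : ∀ (p : Fin N → ℝ) (𝔞 : 𝔸),
      (∑ i, ξhat i * (cpred 𝔞 i p - (d : ℝ)⁻¹)) = (∑ i, ξhat i * cpred 𝔞 i p) - c := by
    intro p 𝔞
    simp only [mul_sub, Finset.sum_sub_distrib, hc, Finset.mul_sum]
    congr 1
    exact Finset.sum_congr rfl fun i _ => by ring
  have hS2' : S2 = (fun x => x - c) '' S1 := by
    ext x
    simp only [hS1, hS2, Set.mem_image, Set.mem_setOf_eq]
    constructor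
    · rintro ⟨p, 𝔞, hp, rfl⟩
      exact ⟨_, ⟨p, 𝔞, hp, rfl⟩, by rw [key]; ring⟩
    · rintro ⟨y, ⟨p, 𝔞, hp, rfl⟩, rfl⟩
      exact ⟨p, 𝔞, hp, by rw [key]; ring⟩
  have hlub : IsLUB S1 (sSup S1) := isLUB_csSup hne hbdd
  have hlub2 : IsLUB S2 (sSup S1 - c) := by
    rw [hS2']
    constructor
    · rintro x ⟨y, hy, rfl⟩
      exact sub_le_sub_right (hlub.1 hy) c
    · intro b hb
      have h1 : ∀ y ∈ S1, y ≤ b + c := fun y hy => by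
        have := hb ⟨y, hy, rfl⟩; simp at this; linarith
      have := hlub.2 h1
      linarith
  have hne2 : S2.Nonempty := by rw [hS2']; exact hne.image _
  have h2 : sSup S2 = sSup S1 - c := hlub2.csSup_eq hne2
  have hsum : (∑ i, ξhat i * ((if i = j then (1 : ℝ) else 0) - (d : ℝ)⁻¹)) = ξhat j - c := by
    simp only [mul_sub, Finset.sum_sub_distrib, mul_ite, mul_one, mul_zero,
      Finset.sum_ite_eq', Finset.mem_univ, if_true, hc, Finset.mul_sum]
    congr 1
    exact Finset.sum_congr rfl fun i _ => by ring
  rw [h2, hsum]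
  ring
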